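/- In any maximal causal chain of a u-segment of an execution of Algorithm RSP, all actions are executed by pairwise distinct non-root processes of V_u; in particular, any maximal causal chain has length at most the number of non-root processes of V_u, and an execution of computePath by a process v never belongs to a maximal causal chain rooted at v. -/

import Mathlib

open Classical

inductive RStatus : Type
  | I | C | EB | EF
deriving DecidableEq

inductive RRule : Type
  | RC | REB | REF | RI | RR
deriving DecidableEq

/-- A network: a finite simple graph with a distinguished root and
strictly positive symmetric edge weights. -/
structure Network (V : Type) [Fintype V] [DecidableEq V] where
  G : SimpleGraph V
  r : V
  w : V → V → ℝ
  w_symm : ∀ u v : V, w u v = w v u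
  w_pos : ∀ u v : V, G.Adj u v → 0 < w u v

/-- A configuration: each process has a status, a parent pointer and a distance value. -/
structure Config (V : Type) where
  st : V → RStatus
  par : V → V
  d : V → ℝ

variable {V : Type} [Fintype V] [DecidableEq V]

/-- The root's variables are constants: status C and distance 0. -/
def RootConst (N : Network V) (γ : Config V) : Prop :=
  γ.st N.r = RStatus.C ∧ γ.d N.r = 0

/-- v ∈ children(u). -/
def childOf (N : Network V) (γ : Config V) (u v : V) : Prop :=
  N.G.Adj u v ∧ γ.st u ≠ RStatus.I ∧ γ.st v ≠ RStatus.I ∧ γ.par v = u ∧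
    γ.d v ≥ γ.d u + N.w v u ∧ (γ.st v = γ.st u ∨ γ.st u = RStatus.EB)

/-- u is an abnormal root. -/
def abRoot (N : Network V) (γ : Config V) (u : V) : Prop :=
  u ≠ N.r ∧ γ.st u ≠ RStatus.I ∧
    (¬ N.G.Adj u (γ.par u) ∨ γ.st (γ.par u) = RStatus.I ∨
     γ.d u < γ.d (γ.par u) + N.w u (γ.par u) ∨
     (γ.st u ≠ γ.st (γ.par u) ∧ γ.st (γ.par u) ≠ RStatus.EB))

def PReset (N : Network V) (γ : Config V) (u : V) : Prop :=
  γ.st u = RStatus.EF ∧ abRoot N γ u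

def PCorrection (N : Network V) (γ : Config V) (u : V) : Prop :=
  ∃ v : V, N.G.Adj u v ∧ γ.st v = RStatus.C ∧ γ.d v + N.w u v < γ.d u

def guardRC (N : Network V) (γ : Config V) (u : V) : Prop :=
  u ≠ N.r ∧ γ.st u = RStatus.C ∧ PCorrection N γ u

def guardREB (N : Network V) (γ : Config V) (u : V) : Prop :=
  u ≠ N.r ∧ γ.st u = RStatus.C ∧ ¬ PCorrection N γ u ∧
    (abRoot N γ u ∨ γ.st (γ.par u) = RStatus.EB)

def guardREF (N : Network V) (γ : Config V) (u : V) : Prop :=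
  u ≠ N.r ∧ γ.st u = RStatus.EB ∧ ∀ v : V, childOf N γ u v → γ.st v = RStatus.EF

def guardRI (N : Network V) (γ : Config V) (u : V) : Prop :=
  u ≠ N.r ∧ PReset N γ u ∧ ∀ v : V, N.G.Adj u v → γ.st v ≠ RStatus.C

def guardRR (N : Network V) (γ : Config V) (u : V) : Prop :=
  u ≠ N.r ∧ (PReset N γ u ∨ γ.st u = RStatus.I) ∧
    ∃ v : V, N.G.Adj u v ∧ γ.st v = RStatus.C

/-- The effect of the macro computePath at u in the step γ → γ'. -/
def ComputePath (N : Network V) (γ γ' : Config V) (u : V) : Prop :=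
  N.G.Adj u (γ'.par u) ∧ γ.st (γ'.par u) = RStatus.C ∧
  (∀ v : V, N.G.Adj u v → γ.st v = RStatus.C →
      γ.d (γ'.par u) + N.w u (γ'.par u) ≤ γ.d v + N.w u v) ∧
  γ'.d u = γ.d (γ'.par u) + N.w u (γ'.par u) ∧ γ'.st u = RStatus.C

/-- u executes the given rule during the step γ → γ'. -/
def ExecRule (N : Network V) (γ γ' : Config V) (u : V) : RRule → Prop
  | RRule.RC => guardRC N γ u ∧ ComputePath N γ γ' u
  | RRule.REB => guardREB N γ u ∧ γ'.st u = RStatus.EB ∧ γ'.par u = γ.par u ∧ γ'.d u = γ.d u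
  | RRule.REF => guardREF N γ u ∧ γ'.st u = RStatus.EF ∧ γ'.par u = γ.par u ∧ γ'.d u = γ.d u
  | RRule.RI => guardRI N γ u ∧ γ'.st u = RStatus.I ∧ γ'.par u = γ.par u ∧ γ'.d u = γ.d u
  | RRule.RR => guardRR N γ u ∧ ComputePath N γ γ' u

def EnabledAt (N : Network V) (γ : Config V) (u : V) : Prop :=
  guardRC N γ u ∨ guardREB N γ u ∨ guardREF N γ u ∨ guardRI N γ u ∨ guardRR N γ u

/-- A step of the distributed (unfair) daemon: a nonempty set of enabled processes
each atomically executes one of its enabled rules; other processes are unchanged. -/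
def Step (N : Network V) (γ γ' : Config V) : Prop :=
  ∃ S : Set V, S.Nonempty ∧ (∀ u ∈ S, ∃ ρ : RRule, ExecRule N γ γ' u ρ) ∧
    ∀ u : V, u ∉ S → γ'.st u = γ.st u ∧ γ'.par u = γ.par u ∧ γ'.d u = γ.d u

def Terminal (N : Network V) (γ : Config V) : Prop :=
  ∀ u : V, ¬ EnabledAt N γ u

/-- Weight of a walk. -/
noncomputable def walkWeight (N : Network V) {u v : V} (p : N.G.Walk u v) : ℝ :=
  (p.darts.map (fun e => N.w e.toProd.1 e.toProd.2)).sum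

/-- x is the weighted distance from u to v in the graph. -/
def IsWDistBetween (N : Network V) (u v : V) (x : ℝ) : Prop :=
  (∃ p : N.G.Walk u v, walkWeight N p = x) ∧ ∀ p : N.G.Walk u v, x ≤ walkWeight N p

/-- x is the weighted distance d(u,r). -/
def IsWDist (N : Network V) (u : V) (x : ℝ) : Prop :=
  IsWDistBetween N u N.r x

/-- k is the hop-distance between u and v: the minimum number of edges
of a minimum-weight path from u to v. -/
def IsHopDist (N : Network V) (u v : V) (k : ℕ) : Prop :=
  (∃ p : N.G.Walk u v, p.length = k ∧ ∀ q : N.G.Walk u v, walkWeight N p ≤ walkWeight N q) ∧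
  (∀ p : N.G.Walk u v, (∀ q : N.G.Walk u v, walkWeight N p ≤ walkWeight N q) → k ≤ p.length)

/-- Legitimate state of a process. -/
def LegitState (N : Network V) (γ : Config V) (u : V) : Prop :=
  u = N.r ∨
  (N.G.Reachable u N.r ∧ γ.st u = RStatus.C ∧ IsWDist N u (γ.d u) ∧
     N.G.Adj u (γ.par u) ∧ γ.d u = γ.d (γ.par u) + N.w u (γ.par u)) ∨
  (¬ N.G.Reachable u N.r ∧ γ.st u = RStatus.I)

def Legitimate (N : Network V) (γ : Config V) : Prop :=
  ∀ u : V, LegitState N γ u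

/-- An execution: an infinite sequence of configurations (stuttering once terminal),
all respecting the root constants, consecutive ones related by steps. -/
def IsExec (N : Network V) (e : ℕ → Config V) : Prop :=
  (∀ i : ℕ, RootConst N (e i)) ∧
  ∀ i : ℕ, Step N (e i) (e (i+1)) ∨ (Terminal N (e i) ∧ e (i+1) = e i)

/-- u executes some rule at step j of execution e. -/
def ExecAt (N : Network V) (e : ℕ → Config V) (j : ℕ) (u : V) : Prop :=
  ∃ ρ : RRule, ExecRule N (e j) (e (j+1)) u ρ

/-- u executes computePath (rule R_C or R_R) at step j. -/
def CPExec (N : Network V) (e : ℕ → Config V) (j : ℕ) (u : V) : Prop :=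
  ExecRule N (e j) (e (j+1)) u RRule.RC ∨ ExecRule N (e j) (e (j+1)) u RRule.RR

def AliveAbRoot (N : Network V) (γ : Config V) (u : V) : Prop :=
  abRoot N γ u ∧ γ.st u ≠ RStatus.EF

/-- Step j is a u-segment break: some non-root process of V_u ceases to be
an alive abnormal root during step j. -/
def SegBreak (N : Network V) (e : ℕ → Config V) (u : V) (j : ℕ) : Prop :=
  ∃ v : V, v ≠ N.r ∧ N.G.Reachable v u ∧
    AliveAbRoot N (e j) v ∧ ¬ AliveAbRoot N (e (j+1)) v

/-- n_maxCC: the maximum number of non-root processes in a connected component. -/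
noncomputable def nmaxCC (N : Network V) : ℕ :=
  sSup {k : ℕ | ∃ v : V, k = {x : V | x ≠ N.r ∧ N.G.Reachable x v}.ncard}

/-- The interval of steps [s, t) is a u-segment of the execution e
(t = ⊤ encodes a final, unbroken segment). -/
def IsSegment (N : Network V) (e : ℕ → Config V) (u : V) (s : ℕ) (t : ℕ∞) : Prop :=
  (s : ℕ∞) < t ∧ (s = 0 ∨ SegBreak N e u (s-1)) ∧
  (∀ j : ℕ, s ≤ j → ((j : ℕ∞) + 1 < t) → ¬ SegBreak N e u j) ∧
  (∀ m : ℕ, t = (m : ℕ∞) → SegBreak N e u (m-1))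

/-- A causal chain of k+1 actions a_1,…,a_{k+1} in the window [s,t):
a_{i} occurs at time τ i, is a computePath execution by process p (i+1)
setting its parent to p i; a_1 occurs no later than any action of p 0,
and each a_{i+1} occurs after a_i but no later than the next action of a_i's executor. -/
structure IsCausalChain (N : Network V) (e : ℕ → Config V) (s : ℕ) (t : ℕ∞)
    (k : ℕ) (τ : Fin (k+1) → ℕ) (p : Fin (k+2) → V) : Prop where
  mono : StrictMono τ
  lb : ∀ i : Fin (k+1), s ≤ τ i
  ub : ∀ i : Fin (k+1), (τ i : ℕ∞) < t
  cp : ∀ i : Fin (k+1), CPExec N e (τ i) (p i.succ) ∧ (e (τ i + 1)).par (p i.succ) = p i.castSucc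
  root_first : ∀ j : ℕ, s ≤ j → j < τ 0 → ¬ ExecAt N e j (p 0)
  between : ∀ i : Fin k, ∀ j : ℕ, τ i.castSucc < j → j < τ i.succ →
      ¬ ExecAt N e j (p i.castSucc.succ)

/-- A maximal causal chain: a causal chain that cannot be extended by a further action. -/
def IsMaxCausalChain (N : Network V) (e : ℕ → Config V) (s : ℕ) (t : ℕ∞)
    (k : ℕ) (τ : Fin (k+1) → ℕ) (p : Fin (k+2) → V) : Prop :=
  IsCausalChain N e s t k τ p ∧
  ¬ ∃ (j : ℕ) (v : V), τ (Fin.last k) < j ∧ (j : ℕ∞) < t ∧ CPExec N e j v ∧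
      (e (j+1)).par v = p (Fin.last (k+1)) ∧
      ∀ j' : ℕ, τ (Fin.last k) < j' → j' < j → ¬ ExecAt N e j' (p (Fin.last (k+1)))

/-- S_{seg,v}: the set of distance values produced by actions of maximal
causal chains rooted at v of the segment [s,t). -/
def SSeg (N : Network V) (e : ℕ → Config V) (s : ℕ) (t : ℕ∞) (v : V) : Set ℝ :=
  {x : ℝ | ∃ (k : ℕ) (τ : Fin (k+1) → ℕ) (p : Fin (k+2) → V),
      IsMaxCausalChain N e s t k τ p ∧ p 0 = v ∧
      ∃ i : Fin (k+1), x = (e (τ i + 1)).d (p i.succ)}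

def Neutralized (N : Network V) (e : ℕ → Config V) (j : ℕ) (u : V) : Prop :=
  EnabledAt N (e j) u ∧ ¬ EnabledAt N (e (j+1)) u

/-- Every process enabled at time s executes or is neutralized before time t. -/
def CompletesRound (N : Network V) (e : ℕ → Config V) (s t : ℕ) : Prop :=
  s ≤ t ∧ ∀ u : V, EnabledAt N (e s) u →
    ∃ j : ℕ, s ≤ j ∧ j < t ∧ (ExecAt N e j u ∨ Neutralized N e j u)

/-- roundEnd e k: the time at which the k-th round ends (the beginning of round k+1). -/
noncomputable def roundEnd (N : Network V) (e : ℕ → Config V) : ℕ → ℕ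
  | 0 => 0
  | k+1 => sInf {t : ℕ | CompletesRound N e (roundEnd N e k) t}

/-- b 0, b 1, …, b k is a branch: b 0 is the root r or an abnormal root,
and each b (i+1) is a child of b i; b i is at depth i+1. -/
def IsBranch (N : Network V) (γ : Config V) (k : ℕ) (b : Fin (k+1) → V) : Prop :=
  (b 0 = N.r ∨ abRoot N γ (b 0)) ∧ ∀ i : Fin k, childOf N γ (b i.castSucc) (b i.succ)

/-- Membership in the regular language (R_I + ε)(R_R + ε)R_C*(R_EB + ε)(R_EF + ε). -/
def InRSPLang (l : List RRule) : Prop :=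
  ∃ a b c d f : List RRule, l = a ++ b ++ c ++ d ++ f ∧
    (a = [] ∨ a = [RRule.RI]) ∧ (b = [] ∨ b = [RRule.RR]) ∧
    (∀ x ∈ c, x = RRule.RC) ∧ (d = [] ∨ d = [RRule.REB]) ∧ (f = [] ∨ f = [RRule.REF])


/-!
Along a causal chain the distance values strictly increase: each action sets the executor's
distance to its parent's distance plus a positive edge weight, and the parent has not moved since
its own chain action. On the other hand, once a process of `V_u` holds status `C` inside the
`u`-segment it can no longer execute `R_R` there: leaving `C` means executing `R_EB`, and an error
wave started inside the segment cannot end before the segment does. So all its later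
`computePath` executions in the segment are `R_C` moves, which strictly decrease its distance.
A process occurring twice in the chain (or executing an action of a chain rooted at itself) would
therefore hand on a distance both larger and smaller than one it held before.
-/

theorem Nat.exists_flip_between {P : ℕ → Prop} {a b : ℕ} (hab : a ≤ b) (ha : P a) (hb : ¬ P b) :
    ∃ j, a ≤ j ∧ j < b ∧ P j ∧ ¬ P (j + 1) := by
  by_contra! h
  have hP : ∀ n, a ≤ n → n ≤ b → P n := fun n hn =>
    Nat.le_induction (fun _ => ha) (fun m ham ih hmb => h m ham (by omega) (ih (by omega))) n hn
  exact hb (hP b hab le_rfl)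

/-- The local states from which `R_EF` is the only executable rule (`execRule_of_inErrorWave`). -/
def InErrorWave (N : Network V) (γ : Config V) (v : V) : Prop :=
  γ.st v = RStatus.EB ∨ (γ.st v = RStatus.EF ∧ ¬ abRoot N γ v)

section Rules

variable {N : Network V} {γ γ' : Config V} {v : V}

theorem CPExec.computePath {e : ℕ → Config V} {j : ℕ} (h : CPExec N e j v) :
    ComputePath N (e j) (e (j+1)) v := by
  rcases h with h | h <;> exact h.2

theorem CPExec.ne_root {e : ℕ → Config V} {j : ℕ} (h : CPExec N e j v) : v ≠ N.r := by
  rcases h with h | h <;> exact h.1.1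

theorem d_lt_of_execRule_RC (h : ExecRule N γ γ' v RRule.RC) : γ'.d v < γ.d v := by
  obtain ⟨⟨-, -, x, hadj, hx, hlt⟩, -, -, hmin, hd, -⟩ := h
  calc γ'.d v = _ := hd
    _ ≤ γ.d x + N.w v x := hmin x hadj hx
    _ < γ.d v := hlt

theorem d_le_of_execRule {ρ : RRule} (h : ExecRule N γ γ' v ρ) (hρ : ρ ≠ RRule.RR) :
    γ'.d v ≤ γ.d v := by
  cases ρ with
  | RC => exact (d_lt_of_execRule_RC h).le
  | REB | REF | RI => exact h.2.2.2.le
  | RR => exact absurd rfl hρ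

theorem st_eq_EB_of_execRule_of_st_eq_C {ρ : RRule} (h : ExecRule N γ γ' v ρ)
    (hC : γ.st v = RStatus.C) (hC' : γ'.st v ≠ RStatus.C) : γ'.st v = RStatus.EB := by
  cases ρ with
  | RC => exact absurd h.2.2.2.2.2 hC'
  | REB => exact h.2.1
  | REF => simp [ExecRule, guardREF, hC] at h
  | RI => simp [ExecRule, guardRI, PReset, hC] at h
  | RR => simp [ExecRule, guardRR, PReset, hC] at h

theorem execRule_of_inErrorWave {ρ : RRule} (hv : InErrorWave N γ v)
    (h : ExecRule N γ γ' v ρ) :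
    γ'.st v = RStatus.EF ∧ γ'.par v = γ.par v ∧ γ'.d v = γ.d v := by
  cases ρ with
  | REF => exact h.2
  | _ => rcases hv with hv | ⟨hv, hab⟩ <;>
      simp_all [ExecRule, guardRC, guardREB, guardRI, guardRR, PReset]

theorem parent_of_not_abRoot (hr : v ≠ N.r) (hEB : γ.st v = RStatus.EB)
    (h : ¬ abRoot N γ v) :
    N.G.Adj v (γ.par v) ∧ γ.st (γ.par v) = RStatus.EB ∧
      γ.d (γ.par v) + N.w v (γ.par v) ≤ γ.d v := by
  simp only [abRoot, not_and, not_or, not_lt, not_not] at h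
  obtain ⟨hadj, -, hd, hst⟩ := h hr (by simp [hEB])
  refine ⟨hadj, ?_, hd⟩
  by_contra hne
  exact hne (hst (by rw [hEB]; exact fun h => hne h.symm))

theorem not_abRoot_of_parent (hadj : N.G.Adj v (γ.par v))
    (hd : γ.d (γ.par v) + N.w v (γ.par v) ≤ γ.d v) (hst : γ.st v = RStatus.EF)
    (hpst : γ.st (γ.par v) = RStatus.EB ∨ γ.st (γ.par v) = RStatus.EF) : ¬ abRoot N γ v := by
  rintro ⟨-, -, h | h | h | ⟨h, h'⟩⟩
  · exact h hadj
  · rcases hpst with hp | hp <;> rw [hp] at h <;> exact RStatus.noConfusion h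
  · linarith
  · rcases hpst with hp | hp
    · exact h' hp
    · exact h (hst.trans hp.symm)

end Rules

section Execution

variable {N : Network V} {e : ℕ → Config V} {v : V}

theorem IsExec.ne_root_of_st_ne_C (he : IsExec N e) {n : ℕ} (h : (e n).st v ≠ RStatus.C) :
    v ≠ N.r := by
  rintro rfl
  exact h (he.1 n).1

theorem IsExec.eq_of_not_execAt (he : IsExec N e) {j : ℕ} (h : ¬ ExecAt N e j v) :
    (e (j+1)).st v = (e j).st v ∧ (e (j+1)).par v = (e j).par v ∧
      (e (j+1)).d v = (e j).d v := by
  rcases he.2 j with ⟨S, -, hS, hout⟩ | ⟨-, hT⟩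
  · exact hout v fun hv => h (hS v hv)
  · rw [hT]; exact ⟨rfl, rfl, rfl⟩

theorem IsExec.d_eq_of_forall_not_execAt (he : IsExec N e) {a b : ℕ} (hab : a ≤ b)
    (h : ∀ l, a ≤ l → l < b → ¬ ExecAt N e l v) : (e b).d v = (e a).d v := by
  induction b, hab using Nat.le_induction with
  | base => rfl
  | succ n hn ih =>
    exact (he.eq_of_not_execAt (h n hn n.lt_succ_self)).2.2.trans
      (ih fun l hl hl' => h l hl (by omega))

theorem IsExec.d_le_of_forall_not_execRule_RR (he : IsExec N e) {a b : ℕ} (hab : a ≤ b)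
    (h : ∀ l, a ≤ l → l < b → ¬ ExecRule N (e l) (e (l+1)) v RRule.RR) :
    (e b).d v ≤ (e a).d v := by
  induction b, hab using Nat.le_induction with
  | base => exact le_rfl
  | succ n hn ih =>
    have hstep : (e (n+1)).d v ≤ (e n).d v := by
      by_cases hx : ExecAt N e n v
      · obtain ⟨ρ, hρ⟩ := hx
        exact d_le_of_execRule hρ (by rintro rfl; exact h n hn n.lt_succ_self hρ)
      · exact (he.eq_of_not_execAt hx).2.2.le
    exact hstep.trans (ih fun l hl hl' => h l hl (by omega))

theorem IsExec.st_succ_eq_EB_of_st_eq_C (he : IsExec N e) {l : ℕ}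
    (hC : (e l).st v = RStatus.C) (hC' : (e (l+1)).st v ≠ RStatus.C) :
    (e (l+1)).st v = RStatus.EB := by
  by_cases hx : ExecAt N e l v
  · obtain ⟨ρ, hρ⟩ := hx
    exact st_eq_EB_of_execRule_of_st_eq_C hρ hC hC'
  · exact absurd ((he.eq_of_not_execAt hx).1.trans hC) hC'

theorem IsExec.step_of_inErrorWave (he : IsExec N e) {l : ℕ} (hv : InErrorWave N (e l) v) :
    ((e (l+1)).st v = RStatus.EB ∨ (e (l+1)).st v = RStatus.EF) ∧
      (e (l+1)).par v = (e l).par v ∧ (e (l+1)).d v = (e l).d v := by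
  by_cases hx : ExecAt N e l v
  · obtain ⟨ρ, hρ⟩ := hx
    obtain ⟨hst, hpar, hd⟩ := execRule_of_inErrorWave hv hρ
    exact ⟨Or.inr hst, hpar, hd⟩
  · obtain ⟨hst, hpar, hd⟩ := he.eq_of_not_execAt hx
    refine ⟨?_, hpar, hd⟩
    rw [hst]
    rcases hv with hv | ⟨hv, -⟩ <;> simp [hv]

theorem IsExec.par_d_eq_of_inErrorWave (he : IsExec N e) {a b : ℕ} (hab : a ≤ b)
    (hv : ∀ l, a ≤ l → l < b → InErrorWave N (e l) v) :
    (e b).par v = (e a).par v ∧ (e b).d v = (e a).d v := by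
  induction b, hab using Nat.le_induction with
  | base => exact ⟨rfl, rfl⟩
  | succ n hn ih =>
    obtain ⟨-, hpar, hd⟩ := he.step_of_inErrorWave (hv n hn n.lt_succ_self)
    obtain ⟨ihpar, ihd⟩ := ih fun l hl hl' => hv l hl (by omega)
    exact ⟨hpar.trans ihpar, hd.trans ihd⟩

end Execution

section Segment

variable {N : Network V} {e : ℕ → Config V} {u : V} {s : ℕ} {t : ℕ∞}

theorem IsSegment.not_segBreak (hseg : IsSegment N e u s t) {j : ℕ} (hs : s ≤ j)
    (ht : ((j + 1 : ℕ) : ℕ∞) < t) : ¬ SegBreak N e u j :=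
  hseg.2.2.1 j hs (by exact_mod_cast ht)

/-- When `v` passes from `EB` to `EF` it is not an abnormal root (that would be a segment break),
so its parent is in the error wave too, and by induction stays there, keeping `v` a normal node. -/
theorem IsSegment.inErrorWave_of_st_eq_EB (he : IsExec N e) (hseg : IsSegment N e u s t)
    {j : ℕ} (hj : (j : ℕ∞) < t) :
    ∀ {v : V} {n : ℕ}, N.G.Reachable v u → s ≤ n → n ≤ j → (e n).st v = RStatus.EB →
      InErrorWave N (e j) v := by
  induction j using Nat.strong_induction_on with
  | _ j IH =>
  intro v n hreach hsn hnj hEB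
  by_cases hEBj : (e j).st v = RStatus.EB
  · exact Or.inl hEBj
  have hwave : ∀ {w : V} {m : ℕ}, N.G.Reachable w u → s ≤ m → (e m).st w = RStatus.EB →
      ∀ l, m ≤ l → l < j → InErrorWave N (e l) w := fun hw hsm hm l hml hlj =>
    IH l hlj (lt_of_le_of_lt (by exact_mod_cast hlj.le) hj) hw hsm hml hm
  obtain ⟨m, hnm, hmj, hEBm, hEBm'⟩ :=
    Nat.exists_flip_between (P := fun l => (e l).st v = RStatus.EB) hnj hEB hEBj
  have hsm : s ≤ m := hsn.trans hnm
  have hEFm : (e (m+1)).st v = RStatus.EF :=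
    (he.step_of_inErrorWave (hwave hreach hsn hEB m hnm hmj)).1.resolve_left hEBm'
  have hr : v ≠ N.r := he.ne_root_of_st_ne_C (n := m) (by simp [hEBm])
  have hnab : ¬ abRoot N (e m) v := fun hab =>
    hseg.not_segBreak hsm (lt_of_le_of_lt (by exact_mod_cast hmj) hj)
      ⟨v, hr, hreach, ⟨hab, by simp [hEBm]⟩, fun h => h.2 hEFm⟩
  obtain ⟨hadj, hqEB, hdist⟩ := parent_of_not_abRoot hr hEBm hnab
  set q := (e m).par v
  have hqwave := hwave (hadj.symm.reachable.trans hreach) hsm hqEB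
  obtain ⟨hpar, hd⟩ := he.par_d_eq_of_inErrorWave hmj.le fun l hml hlj =>
    hwave hreach hsn hEB l (hnm.trans hml) hlj
  obtain ⟨-, hqd⟩ := he.par_d_eq_of_inErrorWave hmj.le hqwave
  obtain ⟨hst, hqst⟩ : ((e j).st v = RStatus.EB ∨ (e j).st v = RStatus.EF) ∧
      ((e j).st q = RStatus.EB ∨ (e j).st q = RStatus.EF) := by
    obtain ⟨j', rfl⟩ : ∃ j', j = j' + 1 := ⟨j - 1, by omega⟩
    exact ⟨(he.step_of_inErrorWave (hwave hreach hsn hEB j' (by omega) (by omega))).1,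
      (he.step_of_inErrorWave (hqwave j' (by omega) (by omega))).1⟩
  refine Or.inr ⟨hst.resolve_left hEBj, not_abRoot_of_parent (hpar ▸ hadj) ?_
    (hst.resolve_left hEBj) (hpar ▸ hqst)⟩
  rw [hpar, hd, hqd]
  exact hdist

theorem IsSegment.not_execRule_RR_of_st_eq_C (he : IsExec N e) (hseg : IsSegment N e u s t)
    {v : V} {a m : ℕ} (hreach : N.G.Reachable v u) (hsa : s ≤ a) (ham : a ≤ m)
    (hmt : (m : ℕ∞) < t) (hC : (e a).st v = RStatus.C) :
    ¬ ExecRule N (e m) (e (m+1)) v RRule.RR := by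
  rintro ⟨⟨-, hguard, -⟩, -⟩
  have hCm : (e m).st v ≠ RStatus.C := by
    rcases hguard with ⟨h, -⟩ | h <;> simp [h]
  obtain ⟨l, hal, hlm, hCl, hCl'⟩ :=
    Nat.exists_flip_between (P := fun l => (e l).st v = RStatus.C) ham hC hCm
  have hEB := he.st_succ_eq_EB_of_st_eq_C hCl hCl'
  rcases hseg.inErrorWave_of_st_eq_EB he hmt hreach (hsa.trans (hal.trans l.le_succ)) hlm hEB
    with h | ⟨h, hnab⟩
  · rcases hguard with ⟨h', -⟩ | h' <;> simp [h'] at h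
  · rcases hguard with ⟨-, hab⟩ | h' <;> simp_all

theorem IsSegment.d_lt_of_cpExec_of_st_eq_C (he : IsExec N e) (hseg : IsSegment N e u s t)
    {v : V} {a b : ℕ} (hreach : N.G.Reachable v u) (hsa : s ≤ a) (hab : a ≤ b)
    (hbt : (b : ℕ∞) < t) (hC : (e a).st v = RStatus.C) (hcp : CPExec N e b v) :
    (e (b+1)).d v < (e a).d v := by
  have hnoRR : ∀ l, a ≤ l → l ≤ b → ¬ ExecRule N (e l) (e (l+1)) v RRule.RR :=
    fun l hal hlb => hseg.not_execRule_RR_of_st_eq_C he hreach hsa hal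
      (lt_of_le_of_lt (by exact_mod_cast hlb) hbt) hC
  calc (e (b+1)).d v < (e b).d v := d_lt_of_execRule_RC (hcp.resolve_right (hnoRR b hab le_rfl))
    _ ≤ (e a).d v := he.d_le_of_forall_not_execRule_RR hab fun l hal hlb => hnoRR l hal hlb.le

end Segment

/-- `readyTime τ i` is a time at which `p i` holds status `C` together with the distance that the
chain hands on to `p (i+1)`: for the root of the chain the time of the first action, for the
executor of the `i`-th action the moment right after it. -/
def readyTime {k : ℕ} (τ : Fin (k+1) → ℕ) : Fin (k+2) → ℕ :=
  Fin.cons (τ 0) fun i => τ i + 1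

@[simp]
theorem readyTime_zero {k : ℕ} (τ : Fin (k+1) → ℕ) : readyTime τ 0 = τ 0 := rfl

@[simp]
theorem readyTime_succ {k : ℕ} (τ : Fin (k+1) → ℕ) (i : Fin (k+1)) :
    readyTime τ i.succ = τ i + 1 := rfl

namespace IsCausalChain

variable {N : Network V} {e : ℕ → Config V} {s : ℕ} {t : ℕ∞} {k : ℕ} {τ : Fin (k+1) → ℕ}
  {p : Fin (k+2) → V}

theorem adj (hc : IsCausalChain N e s t k τ p) (i : Fin (k+1)) :
    N.G.Adj (p i.succ) (p i.castSucc) := by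
  simpa only [(hc.cp i).2] using (hc.cp i).1.computePath.1

theorem reachable (hc : IsCausalChain N e s t k τ p) {u : V} (hp0 : N.G.Reachable (p 0) u)
    (i : Fin (k+2)) : N.G.Reachable (p i) u := by
  induction i using Fin.induction with
  | zero => exact hp0
  | succ i ih => exact (hc.adj i).reachable.trans ih

theorem le_readyTime (hc : IsCausalChain N e s t k τ p) (i : Fin (k+2)) : s ≤ readyTime τ i := by
  cases i using Fin.cases with
  | zero => exact hc.lb 0
  | succ i => exact (hc.lb i).trans (Nat.le_succ _)

theorem readyTime_le (hc : IsCausalChain N e s t k τ p) {i : Fin (k+2)} {j : Fin (k+1)}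
    (hij : i ≤ j.castSucc) : readyTime τ i ≤ τ j := by
  cases i using Fin.cases with
  | zero => exact hc.mono.monotone (Fin.zero_le j)
  | succ i => exact hc.mono (Fin.le_castSucc_iff.mp hij |> Fin.succ_lt_succ_iff.mp)

theorem st_readyTime (hc : IsCausalChain N e s t k τ p) (i : Fin (k+2)) :
    (e (readyTime τ i)).st (p i) = RStatus.C := by
  cases i using Fin.cases with
  | zero =>
    have h := (hc.cp 0).1.computePath.2.1
    rwa [(hc.cp 0).2] at h
  | succ i => exact (hc.cp i).1.computePath.2.2.2.2

theorem d_readyTime_eq (hc : IsCausalChain N e s t k τ p) (he : IsExec N e) (i : Fin (k+1)) :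
    (e (τ i)).d (p i.castSucc) = (e (readyTime τ i.castSucc)).d (p i.castSucc) := by
  cases i using Fin.cases with
  | zero => rfl
  | succ i =>
    rw [← Fin.succ_castSucc]
    exact he.d_eq_of_forall_not_execAt (hc.mono Fin.castSucc_lt_succ)
      (hc.between i)

theorem strictMono_d_readyTime (hc : IsCausalChain N e s t k τ p) (he : IsExec N e) :
    StrictMono fun i => (e (readyTime τ i)).d (p i) := by
  refine Fin.strictMono_iff_lt_succ.2 fun i => ?_
  obtain ⟨hadj, -, -, hd, -⟩ := (hc.cp i).1.computePath
  rw [(hc.cp i).2] at hadj hd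
  have hw := N.w_pos _ _ hadj
  rw [readyTime_succ, hd, hc.d_readyTime_eq he i]
  linarith

theorem injective (hc : IsCausalChain N e s t k τ p) (he : IsExec N e) {u : V}
    (hseg : IsSegment N e u s t) (hp0 : N.G.Reachable (p 0) u) : Function.Injective p := by
  refine Function.Injective.of_lt_imp_ne fun i j hij heq => ?_
  obtain ⟨j, rfl⟩ := Fin.exists_succ_eq.mpr (Fin.ne_zero_of_lt hij)
  have hlt := hseg.d_lt_of_cpExec_of_st_eq_C he (hc.reachable hp0 i) (hc.le_readyTime i)
    (hc.readyTime_le (Fin.le_castSucc_iff.mpr hij)) (hc.ub j) (hc.st_readyTime i)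
    (heq ▸ (hc.cp j).1)
  have hmono : (e (readyTime τ i)).d (p i) < (e (τ j + 1)).d (p i) := by
    simpa only [readyTime_succ, ← heq] using hc.strictMono_d_readyTime he hij
  exact lt_asymm hlt hmono

end IsCausalChain

theorem stmt9_general (N : Network V) (e : ℕ → Config V) (he : IsExec N e)
    (u : V) (s : ℕ) (t : ℕ∞) (hseg : IsSegment N e u s t)
    (k : ℕ) (τ : Fin (k+1) → ℕ) (p : Fin (k+2) → V)
    (hch : IsMaxCausalChain N e s t k τ p)
    (hp0 : N.G.Reachable (p 0) u) :
    (∀ i : Fin (k+1), p i.succ ≠ N.r ∧ N.G.Reachable (p i.succ) u) ∧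
    Function.Injective (fun i : Fin (k+1) => p i.succ) ∧
    (∀ i : Fin (k+1), p i.succ ≠ p 0) ∧
    k + 1 ≤ {x : V | x ≠ N.r ∧ N.G.Reachable x u}.ncard := by
  have hc := hch.1
  have hmem : ∀ i : Fin (k+1), p i.succ ≠ N.r ∧ N.G.Reachable (p i.succ) u :=
    fun i => ⟨(hc.cp i).1.ne_root, hc.reachable hp0 i.succ⟩
  have hinj : Function.Injective (fun i : Fin (k+1) => p i.succ) :=
    (hc.injective he hseg hp0).comp (Fin.succ_injective _)
  refine ⟨hmem, hinj, fun i => (hc.injective he hseg hp0).ne (Fin.succ_ne_zero i), ?_⟩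
  calc k + 1 = (Set.univ : Set (Fin (k+1))).ncard := by simp
    _ ≤ _ := Set.ncard_le_ncard_of_injOn _ (fun i _ => hmem i) hinj.injOn

/-- all actions of a maximal causal chain of a u-segment are executed
by pairwise distinct non-root processes of V_u; hence its length is at most the
number of non-root processes of V_u, and no process executes an action of a chain
rooted at itself. -/
theorem stmt9 (N : Network V) (e : ℕ → Config V) (he : IsExec N e)
    (u : V) (hu : u ≠ N.r) (s : ℕ) (t : ℕ∞) (hseg : IsSegment N e u s t)
    (k : ℕ) (τ : Fin (k+1) → ℕ) (p : Fin (k+2) → V)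
    (hch : IsMaxCausalChain N e s t k τ p)
    (hp0 : N.G.Reachable (p 0) u) :
    (∀ i : Fin (k+1), p i.succ ≠ N.r ∧ N.G.Reachable (p i.succ) u) ∧
    Function.Injective (fun i : Fin (k+1) => p i.succ) ∧
    (∀ i : Fin (k+1), p i.succ ≠ p 0) ∧
    k + 1 ≤ {x : V | x ≠ N.r ∧ N.G.Reachable x u}.ncard :=
  stmt9_general N e he u s t hseg k τ p hch hp0
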